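/- Fix a tier structure t and a report Q_i of student i that misranks two same-tier schools relative to his true preference R_i (there exist s, s′ with t_s = t_{s′}, s P_i s′ but s′ Q_i s). Let Q*_i agree with Q_i except that within that tier its acceptable schools are reordered to agree with R_i. Then for every profile Q_{-i} of others' reports, TDA(t)(Q*_i, Q_{-i})(i) R_i TDA(t)(Q_i, Q_{-i})(i); consequently Q_i is either weakly dominated by Q*_i or yields the same assignment for i as Q*_i against every Q_{-i}. -/

import Mathlib

set_option linter.unusedSectionVars false

namespace SchoolChoice

/-- A strict preference over `S ∪ {self}`, encoded by an injective ranking function on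
`Option S`; `none` denotes being unmatched (the student himself), and a smaller rank
means more preferred. Injective rankings on a finite set are exactly strict linear orders. -/
structure Pref (S : Type) where
  rank : Option S → ℕ
  inj : Function.Injective rank

/-- Quotas together with strict priorities of the schools: `prank s` ranks the students
at school `s`, a smaller rank meaning higher priority. -/
structure Prio (I S : Type) where
  quota : S → ℕ
  prank : S → I → ℕ
  inj : ∀ s, Function.Injective (prank s)

variable {I S : Type} [Fintype I] [Fintype S] [DecidableEq I] [DecidableEq S]

/-- `i` has strictly higher priority than `j` at school `s`. -/
def Prio.higher (E : Prio I S) (s : S) (i j : I) : Prop :=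
  E.prank s i < E.prank s j

/-- A matching assigns to each student a school or himself (`none`). -/
abbrev Matching (I S : Type) := I → Option S

/-- The set of students assigned to school `s`. -/
def assigned (μ : Matching I S) (s : S) : Finset I :=
  Finset.univ.filter (fun i => μ i = some s)

/-- Quotas are respected. -/
def Feasible (E : Prio I S) (μ : Matching I S) : Prop :=
  ∀ s, (assigned μ s).card ≤ E.quota s

/-- `(i, s)` is a blocking pair of `μ` with respect to preferences `R`:
`i` strictly prefers `s` to his assignment, and either `s` has an empty seat
(wastefulness) or some student assigned to `s` has lower priority than `i`
(justified envy). -/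
def Blocks (E : Prio I S) (R : I → Pref S) (μ : Matching I S) (i : I) (s : S) : Prop :=
  (R i).rank (some s) < (R i).rank (μ i) ∧
    ((assigned μ s).card < E.quota s ∨ ∃ j, μ j = some s ∧ E.higher s i j)

/-- Individual rationality: every student weakly prefers his assignment to being unmatched. -/
def IndivRat (R : I → Pref S) (μ : Matching I S) : Prop :=
  ∀ i, (R i).rank (μ i) ≤ (R i).rank none

/-- Non-wastefulness: no student prefers a school with an empty seat to his assignment. -/
def NonWasteful (E : Prio I S) (R : I → Pref S) (μ : Matching I S) : Prop :=
  ∀ i s, (R i).rank (some s) < (R i).rank (μ i) → E.quota s ≤ (assigned μ s).card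

/-- Stability: feasible, individually rational, and no blocking pair
(no justified envy and non-wasteful). -/
def Stable (E : Prio I S) (R : I → Pref S) (μ : Matching I S) : Prop :=
  Feasible E μ ∧ IndivRat R μ ∧ ∀ i s, ¬ Blocks E R μ i s

/-- The student-optimal stable matching for the (reported) preferences. -/
def StudentOptimal (E : Prio I S) (R : I → Pref S) (μ : Matching I S) : Prop :=
  Stable E R μ ∧ ∀ ν, Stable E R ν → ∀ i, (R i).rank (μ i) ≤ (R i).rank (ν i)

open Classical in
/-- The student-proposing deferred acceptance mechanism: by the Gale–Shapley theorem its
outcome is the (unique) student-optimal stable matching of the reported preferences. -/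
noncomputable def DA (E : Prio I S) (R : I → Pref S) : Matching I S :=
  if h : ∃ μ, StudentOptimal E R μ then h.choose else fun _ => none

/-- A strict upper bound for the values of a ranking. -/
noncomputable def bnd (p : Pref S) : ℕ := (Finset.univ.sup p.rank) + 1

lemma rank_lt_bnd (p : Pref S) (x : Option S) : p.rank x < bnd p :=
  Nat.lt_succ_of_le (Finset.le_sup (Finset.mem_univ x))

private lemma mul_add_lt {a K B r : ℕ} (ha : a ≤ K) (hr : r < B) :
    a * B + r < (K + 1) * B := by
  calc a * B + r < a * B + B := by omega
    _ = (a + 1) * B := by ring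
    _ ≤ (K + 1) * B := Nat.mul_le_mul (by omega) le_rfl

/-- Is an alternative "inside the market" `A`?  `none` always is. -/
def goodB (A : S → Prop) [DecidablePred A] : Option S → Bool
  | none => true
  | some s => decide (A s)

/-- The preference truncated to the set of schools `A`: schools in `A` (and the outside
option `none`) keep their relative order, while all schools outside `A` are pushed below
`none` (become unacceptable), keeping their relative order among themselves. -/
noncomputable def trunc (A : S → Prop) [DecidablePred A] (p : Pref S) : Pref S where
  rank x := (if goodB A x then 0 else bnd p) + p.rank x
  inj := by
    intro x y h
    by_cases hx : goodB A x <;> by_cases hy : goodB A y <;>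
      simp only [hx, hy, if_true, if_false, Bool.false_eq_true, zero_add] at h
    · exact p.inj h
    · have := rank_lt_bnd p x; omega
    · have := rank_lt_bnd p y; omega
    · exact p.inj (by omega)

/-- The reshuffled preference with respect to a tier structure `t`: acceptable schools
are grouped by tier in increasing tier order (keeping the original relative order within
each tier) above `none`, and all unacceptable schools are placed below `none`. -/
noncomputable def reshuffle (t : S → ℕ) (p : Pref S) : Pref S where
  rank x :=
    Option.elim x ((Finset.univ.sup t + 1) * bnd p)
      (fun s =>
        if p.rank (some s) < p.rank none then t s * bnd p + p.rank (some s)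
        else (Finset.univ.sup t + 1) * bnd p + 1 + p.rank (some s))
  inj := by
    have hB : ∀ x, p.rank x < bnd p := rank_lt_bnd p
    have hK : ∀ s : S, t s ≤ Finset.univ.sup t := fun s => Finset.le_sup (Finset.mem_univ s)
    intro x y h
    rcases x with _ | s <;> rcases y with _ | s' <;>
      simp only [Option.elim_none, Option.elim_some] at h
    · rfl
    · by_cases hy : p.rank (some s') < p.rank none <;> simp only [hy, if_true, if_false] at h
      · have := mul_add_lt (hK s') (hB (some s')); omega
      · omega
    · by_cases hx : p.rank (some s) < p.rank none <;> simp only [hx, if_true, if_false] at h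
      · have := mul_add_lt (hK s) (hB (some s)); omega
      · omega
    · by_cases hx : p.rank (some s) < p.rank none <;>
        by_cases hy : p.rank (some s') < p.rank none <;>
        simp only [hx, hy, if_true, if_false] at h
      · have hts : t s = t s' := by
          rcases Nat.lt_trichotomy (t s) (t s') with h1 | h1 | h1
          · have h2 : t s * bnd p + p.rank (some s) < t s' * bnd p + p.rank (some s') := by
              have h3 := mul_add_lt (a := t s) (K := t s' - 1) (B := bnd p) (by omega) (hB (some s))
              have h4 : (t s' - 1 + 1) * bnd p = t s' * bnd p := by congr 1; omega
              omega
            omega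
          · exact h1
          · have h2 : t s' * bnd p + p.rank (some s') < t s * bnd p + p.rank (some s) := by
              have h3 := mul_add_lt (a := t s') (K := t s - 1) (B := bnd p) (by omega) (hB (some s'))
              have h4 : (t s - 1 + 1) * bnd p = t s * bnd p := by congr 1; omega
              omega
            omega
        rw [hts] at h
        exact p.inj (by omega)
      · have := mul_add_lt (hK s) (hB (some s)); omega
      · have := mul_add_lt (hK s') (hB (some s')); omega
      · exact p.inj (by omega)

/-- A tier structure assigning each school a tier in `{1, …, T}`, each tier nonempty. -/
def IsTierStructure (t : S → ℕ) (T : ℕ) : Prop :=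
  (∀ s, 1 ≤ t s ∧ t s ≤ T) ∧ ∀ k, 1 ≤ k → k ≤ T → ∃ s, t s = k

/-- Rounds `1, …, k` of the tiered deferred acceptance mechanism: in round `k` the
students left unmatched so far participate in the DA mechanism with their preferences
truncated to the tier-`k` schools (already matched students participate with nothing
acceptable); students matched in earlier rounds keep their assignments. -/
noncomputable def TDAaux (E : Prio I S) (t : S → ℕ) (Q : I → Pref S) : ℕ → Matching I S
  | 0 => fun _ => none
  | k + 1 => fun i =>
      match TDAaux E t Q k i with
      | some s => some s
      | none =>
          DA E (fun j =>
            if TDAaux E t Q k j = none then trunc (fun s => t s = k + 1) (Q j)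
            else trunc (fun _ => False) (Q j)) i

/-- The tiered deferred acceptance mechanism under tier structure `t`. -/
noncomputable def TDA (E : Prio I S) (t : S → ℕ) (Q : I → Pref S) : Matching I S :=
  TDAaux E t Q (Finset.univ.sup t)

/-- `Q` is a (pure) Nash equilibrium of the preference revelation game induced by the
mechanism `f` when the true preferences are `R`: no student can obtain a school he truly
strictly prefers by unilaterally changing his report. -/
def NashEq (R : I → Pref S) (f : (I → Pref S) → Matching I S) (Q : I → Pref S) : Prop :=
  ∀ (i : I) (Qi' : Pref S),
    (R i).rank (f Q i) ≤ (R i).rank (f (Function.update Q i Qi') i)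

/-- `μ` is a Nash equilibrium outcome of the revelation game induced by `f` at true
preferences `R`. -/
def NashOutcome (R : I → Pref S) (f : (I → Pref S) → Matching I S) (μ : Matching I S) : Prop :=
  ∃ Q, NashEq R f Q ∧ f Q = μ

/-- The preference `p` is aligned with the tier structure `t`: a (weakly) more preferred
school always lies in a weakly earlier tier. -/
def AlignedPref (t : S → ℕ) (p : Pref S) : Prop :=
  ∀ s s' : S, p.rank (some s) ≤ p.rank (some s') → t s ≤ t s'

/-- `p` lists exactly the school in `o` (if any) as acceptable. -/
def OnlyAcceptable (p : Pref S) (o : Option S) : Prop :=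
  ∀ s : S, (p.rank (some s) < p.rank none ↔ o = some s)

/-- An Ergin cycle of the priority structure among the schools in `A`. -/
def Cycle (E : Prio I S) (A : S → Prop) : Prop :=
  ∃ a b : S, A a ∧ A b ∧ a ≠ b ∧ ∃ i j k : I,
    E.higher a i j ∧ E.higher a j k ∧ E.higher b k i ∧
    ∃ Ia Ib : Finset I, Disjoint Ia Ib ∧
      (∀ l ∈ Ia, l ≠ i ∧ l ≠ j ∧ l ≠ k ∧ E.higher a l j) ∧
      (∀ l ∈ Ib, l ≠ i ∧ l ≠ j ∧ l ≠ k ∧ E.higher b l i) ∧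
      Ia.card = E.quota a - 1 ∧ Ib.card = E.quota b - 1

/-- Within-tier acyclicity of a generalized priority structure: no Ergin cycle among the
schools of any single tier. -/
def WithinTierAcyclic (E : Prio I S) (t : S → ℕ) : Prop :=
  ∀ k : ℕ, ¬ Cycle E (fun s => t s = k)

/-- The (strict) preference `pr` of school `s` over sets of students is a responsive
extension of its priorities. -/
def Responsive (E : Prio I S) (s : S) (pr : Finset I → Finset I → Prop) : Prop :=
  ∀ (J : Finset I) (i j : I), i ∉ J → j ∉ J → E.higher s i j →
    pr (insert i J) (insert j J)

/-- `t` is a refinement of `t'`: `t'` ranks `a` in a strictly later tier than `b` only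
if `t` does. -/
def Refines (t t' : S → ℕ) : Prop :=
  ∀ a b : S, t' b < t' a → t b < t a

/-!
Outside the tier `t s` the reports `Qi` and `Qstar` rank the schools alike, so TDA runs
identically under both until the round of that tier. If `i` is still unmatched then, that round
is a DA market in which his two truncated reports accept the same schools. By
strategy-proofness of DA, the report ordered by `Ri` gets him a weakly better school; and if he
is unmatched under one report he is unmatched under both, in which case the round's outcome
does not depend on his report at all. Strategy-proofness comes from the blocking lemma, proved
on an explicit run of deferred acceptance.
-/

open Finset

instance Prio.decidableHigher (E : Prio I S) (s : S) (i j : I) : Decidable (E.higher s i j) :=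
  inferInstanceAs (Decidable (E.prank s i < E.prank s j))

namespace Prio

variable (E : Prio I S)

/-- The position of `j` in `P` when `P` is listed by decreasing priority at `s` (from `1`). -/
def rankIn (s : S) (P : Finset I) (j : I) : ℕ :=
  #(P.filter fun l => E.prank s l ≤ E.prank s j)

def choice (s : S) (P : Finset I) : Finset I :=
  P.filter fun j => E.rankIn s P j ≤ E.quota s

variable {E} {s : S} {P : Finset I} {j l : I}

lemma rankIn_mono (h : E.prank s j ≤ E.prank s l) : E.rankIn s P j ≤ E.rankIn s P l :=
  card_le_card fun _ hm => mem_filter.mpr ⟨(mem_filter.mp hm).1, (mem_filter.mp hm).2.trans h⟩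

lemma rankIn_lt_rankIn (hl : l ∈ P) (h : E.higher s j l) : E.rankIn s P j < E.rankIn s P l := by
  refine card_lt_card ⟨fun m hm => ?_, fun hsub => ?_⟩
  · exact mem_filter.mpr ⟨(mem_filter.mp hm).1, (mem_filter.mp hm).2.trans h.le⟩
  · exact absurd h (not_lt.mpr (mem_filter.mp (hsub (mem_filter.mpr ⟨hl, le_rfl⟩))).2)

lemma higher_of_rankIn_lt (h : E.rankIn s P j < E.rankIn s P l) : E.higher s j l :=
  not_le.mp fun h' => absurd h (not_lt.mpr (rankIn_mono h'))

lemma rankIn_injOn : Set.InjOn (E.rankIn s P) P := by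
  intro j hj l hl h
  rcases lt_trichotomy (E.prank s j) (E.prank s l) with hjl | hjl | hjl
  · exact absurd h (rankIn_lt_rankIn hl hjl).ne
  · exact E.inj s hjl
  · exact absurd h (rankIn_lt_rankIn hj hjl).ne'

lemma image_rankIn : P.image (E.rankIn s P) = Icc 1 #P := by
  refine eq_of_subset_of_card_le (fun v hv => ?_) ?_
  · obtain ⟨j, hj, rfl⟩ := mem_image.mp hv
    exact mem_Icc.mpr
      ⟨card_pos.mpr ⟨j, mem_filter.mpr ⟨hj, le_rfl⟩⟩, card_filter_le _ _⟩
  · rw [card_image_of_injOn rankIn_injOn, Nat.card_Icc]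
    omega

lemma choice_subset : E.choice s P ⊆ P := filter_subset _ _

lemma card_choice : #(E.choice s P) = min (E.quota s) #P := by
  have hinj : Set.InjOn (E.rankIn s P) (E.choice s P) :=
    rankIn_injOn.mono (coe_subset.mpr choice_subset)
  have himage : (E.choice s P).image (E.rankIn s P) = Icc 1 (min (E.quota s) #P) := by
    have h := congrArg (filter (· ≤ E.quota s)) (image_rankIn (E := E) (s := s) (P := P))
    rw [filter_image] at h
    rw [choice, h]
    ext v
    simp only [mem_filter, mem_Icc]
    omega
  rw [← card_image_of_injOn hinj, himage, Nat.card_Icc]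
  omega

lemma choice_eq_self (h : #P ≤ E.quota s) : E.choice s P = P := by
  refine filter_true_of_mem fun j hj => ?_
  have : E.rankIn s P j ∈ Icc 1 #P := by
    rw [← image_rankIn (E := E)]
    exact mem_image_of_mem _ hj
  exact (mem_Icc.mp this).2.trans h

lemma card_choice_of_notMem (hj : j ∈ P) (hjc : j ∉ E.choice s P) :
    #(E.choice s P) = E.quota s := by
  have : E.quota s < #P := not_le.mp fun h => hjc ((choice_eq_self h).symm ▸ hj)
  rw [card_choice]
  omega

lemma higher_of_mem_choice (hj : j ∈ P) (hjc : j ∉ E.choice s P) (hl : l ∈ E.choice s P) :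
    E.higher s l j := by
  simp only [choice, mem_filter, not_and, not_le] at hjc hl
  exact higher_of_rankIn_lt (hl.2.trans_lt (hjc hj))

lemma choice_full_of_quota_le (h : E.quota s ≤ #(P.filter (E.higher s · j))) :
    #(E.choice s P) = E.quota s ∧ ∀ y ∈ E.choice s P, E.higher s y j := by
  have hcard : #(E.choice s P) = E.quota s := by
    have := card_filter_le P (E.higher s · j)
    rw [card_choice]
    omega
  refine ⟨hcard, fun y hy => ?_⟩
  by_contra hyj
  have hsub : insert y (P.filter (E.higher s · j)) ⊆
      P.filter fun l => E.prank s l ≤ E.prank s y :=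
    insert_subset (mem_filter.mpr ⟨choice_subset hy, le_rfl⟩) fun g hg =>
      mem_filter.mpr ⟨(mem_filter.mp hg).1, ((mem_filter.mp hg).2.trans_le (not_lt.mp hyj)).le⟩
  have hyF : y ∉ P.filter (E.higher s · j) := fun hy' => hyj (mem_filter.mp hy').2
  have := card_le_card hsub
  rw [card_insert_of_notMem hyF] at this
  have hy' := (mem_filter.mp hy).2
  unfold rankIn at hy'
  omega

end Prio

noncomputable def Pref.best (p : Pref S) (C : Finset S) : Option S :=
  if h : C.Nonempty then some (exists_min_image C (fun s => p.rank (some s)) h).choose else none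

lemma Pref.best_mem {p : Pref S} {C : Finset S} {s : S} (h : p.best C = some s) : s ∈ C := by
  unfold Pref.best at h
  split_ifs at h with hne
  rw [← Option.some_injective _ h]
  exact (exists_min_image C (fun s => p.rank (some s)) hne).choose_spec.1

lemma Pref.rank_best_le {p : Pref S} {C : Finset S} {s : S} (hs : s ∈ C) :
    p.rank (p.best C) ≤ p.rank (some s) := by
  unfold Pref.best
  rw [dif_pos ⟨s, hs⟩]
  exact (exists_min_image C (fun s => p.rank (some s)) ⟨s, hs⟩).choose_spec.2 s hs

section DeferredAcceptance

variable (E : Prio I S) (R : I → Pref S)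

/-- The acceptable schools that have not rejected `i`, given the rejection sets `D`. -/
def candidates (D : I → Finset S) (i : I) : Finset S :=
  univ.filter fun s => (R i).rank (some s) < (R i).rank none ∧ s ∉ D i

noncomputable def proposal (D : I → Finset S) (i : I) : Option S :=
  (R i).best (candidates R D i)

noncomputable def proposers (D : I → Finset S) (s : S) : Finset I :=
  univ.filter fun j => proposal R D j = some s

noncomputable def held (D : I → Finset S) (s : S) : Finset I :=
  E.choice s (proposers R D s)

/-- One round of deferred acceptance, run in parallel: every school keeps the best of its
proposers and each rejected student records the rejection. -/
noncomputable def rejectStep (D : I → Finset S) : I → Finset S := fun j =>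
  D j ∪ univ.filter fun s => proposal R D j = some s ∧ j ∉ held E R D s

noncomputable def rejections (n : ℕ) : I → Finset S := (rejectStep E R)^[n] ⊥

variable {E R} {D D' : I → Finset S} {i j : I} {s : S}

lemma mem_candidates :
    s ∈ candidates R D i ↔ (R i).rank (some s) < (R i).rank none ∧ s ∉ D i := by
  simp [candidates]

lemma mem_candidates_of_proposal_eq (h : proposal R D i = some s) : s ∈ candidates R D i :=
  Pref.best_mem h

lemma rank_proposal_le {x : Option S} (hx : (R i).rank x ≤ (R i).rank none)
    (hD : ∀ s, x = some s → s ∉ D i) : (R i).rank (proposal R D i) ≤ (R i).rank x := by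
  cases x with
  | some s =>
    exact Pref.rank_best_le (mem_candidates.mpr
      ⟨lt_of_le_of_ne hx ((R i).inj.ne (by simp)), hD s rfl⟩)
  | none =>
    cases h : proposal R D i with
    | none => exact le_rfl
    | some m => exact (mem_candidates.mp (mem_candidates_of_proposal_eq h)).1.le

lemma rank_proposal_le_none : (R i).rank (proposal R D i) ≤ (R i).rank none :=
  rank_proposal_le le_rfl (by simp)

lemma mem_of_rank_lt_proposal (h : (R i).rank (some s) < (R i).rank (proposal R D i)) :
    s ∈ D i := by
  by_contra hs
  have := rank_proposal_le (D := D) (h.le.trans rank_proposal_le_none)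
    (by rintro _ ⟨⟩; exact hs)
  omega

lemma proposal_congr (h : D i = D' i) : proposal R D i = proposal R D' i := by
  simp only [proposal, candidates, h]

lemma rank_proposal_mono (h : D i ⊆ D' i) :
    (R i).rank (proposal R D i) ≤ (R i).rank (proposal R D' i) :=
  rank_proposal_le rank_proposal_le_none fun _ hs hsD =>
    (mem_candidates.mp (mem_candidates_of_proposal_eq hs)).2 (h hsD)

lemma proposal_eq_of_mem_held (h : j ∈ held E R D s) : proposal R D j = some s :=
  (mem_filter.mp (Prio.choice_subset h)).2

lemma mem_rejectStep :
    s ∈ rejectStep E R D j ↔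
      s ∈ D j ∨ (proposal R D j = some s ∧ j ∉ held E R D s) := by
  simp [rejectStep]

lemma le_rejectStep : D ≤ rejectStep E R D := fun _ => subset_union_left

lemma proposal_rejectStep_of_mem_held (h : j ∈ held E R D s) :
    proposal R (rejectStep E R D) j = some s := by
  refine (proposal_congr (Subset.antisymm (fun s' hs' => ?_) (le_rejectStep j))).trans
    (proposal_eq_of_mem_held h)
  rcases mem_rejectStep.mp hs' with hs' | ⟨hp, hj⟩
  · exact hs'
  · cases (proposal_eq_of_mem_held h).symm.trans hp
    exact absurd h hj

variable (E R) in
lemma rejections_succ (n : ℕ) : rejections E R (n + 1) = rejectStep E R (rejections E R n) :=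
  Function.iterate_succ_apply' _ _ _

variable (E R) in
lemma monotone_rejections : Monotone (rejections E R) :=
  monotone_nat_of_le_succ fun n => (rejections_succ E R n).symm ▸ le_rejectStep

variable (E R) in
lemma exists_rejections_stable : ∃ N, ∀ m, N ≤ m → rejections E R N = rejections E R m :=
  WellFoundedGT.monotone_chain_condition ⟨rejections E R, monotone_rejections E R⟩

end DeferredAcceptance

section StudentOptimality

variable (E : Prio I S) (R : I → Pref S)

noncomputable def stableRound : ℕ := (exists_rejections_stable E R).choose

noncomputable def finalRejections : I → Finset S := rejections E R (stableRound E R)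

noncomputable def daMatching : Matching I S := proposal R (finalRejections E R)

def RejectionsJustified (D : I → Finset S) : Prop :=
  ∀ j s, s ∈ D j → E.quota s ≤ #((proposers R D s).filter (E.higher s · j))

variable {E R} {D : I → Finset S} {i j : I} {s : S}

lemma rejections_eq_final {m : ℕ} (h : stableRound E R ≤ m) :
    rejections E R m = finalRejections E R :=
  ((exists_rejections_stable E R).choose_spec m h).symm

variable (E R) in
lemma rejections_le_final (n : ℕ) : rejections E R n ≤ finalRejections E R := by
  rcases le_total n (stableRound E R) with h | h
  · exact monotone_rejections E R h
  · exact (rejections_eq_final h).le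

variable (E R) in
lemma rejectStep_final : rejectStep E R (finalRejections E R) = finalRejections E R := by
  rw [finalRejections, ← rejections_succ]
  exact rejections_eq_final (Nat.le_succ _)

lemma mem_held_of_proposal_eq_daMatching {n : ℕ} (h : proposal R (rejections E R n) j = some s)
    (hμ : daMatching E R j = some s) : j ∈ held E R (rejections E R n) s := by
  by_contra hj
  have hs : s ∈ rejections E R (n + 1) j := by
    rw [rejections_succ]
    exact mem_rejectStep.mpr (Or.inr ⟨h, hj⟩)
  exact (mem_candidates.mp (mem_candidates_of_proposal_eq hμ)).2
    (rejections_le_final E R (n + 1) j hs)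

lemma assigned_daMatching : assigned (daMatching E R) s = held E R (finalRejections E R) s :=
  Subset.antisymm
    (fun _ hj => mem_held_of_proposal_eq_daMatching (mem_filter.mp hj).2 (mem_filter.mp hj).2)
    Prio.choice_subset

variable (E R) in
lemma feasible_daMatching : Feasible E (daMatching E R) := fun s => by
  rw [assigned_daMatching, held, Prio.card_choice]
  exact min_le_left _ _

variable (E R) in
lemma indivRat_daMatching : IndivRat R (daMatching E R) := fun _ => rank_proposal_le_none

lemma RejectionsJustified.held_full (hD : RejectionsJustified E R D)
    (h : s ∈ rejectStep E R D j) :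
    #(held E R D s) = E.quota s ∧ ∀ y ∈ held E R D s, E.higher s y j := by
  rcases mem_rejectStep.mp h with h | ⟨hp, hj⟩
  · exact Prio.choice_full_of_quota_le (hD j s h)
  · have hjP : j ∈ proposers R D s := mem_filter.mpr ⟨mem_univ _, hp⟩
    exact ⟨Prio.card_choice_of_notMem hjP hj, fun y hy => Prio.higher_of_mem_choice hjP hj hy⟩

lemma RejectionsJustified.rejectStep (hD : RejectionsJustified E R D) :
    RejectionsJustified E R (rejectStep E R D) := fun j s h => by
  obtain ⟨hcard, hhigher⟩ := hD.held_full h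
  calc E.quota s = #(held E R D s) := hcard.symm
    _ ≤ _ := card_le_card fun y hy => mem_filter.mpr
        ⟨mem_filter.mpr ⟨mem_univ _, proposal_rejectStep_of_mem_held hy⟩, hhigher y hy⟩

variable (E R) in
lemma rejectionsJustified_rejections (n : ℕ) : RejectionsJustified E R (rejections E R n) := by
  induction n with
  | zero => intro j s h; simp [rejections] at h
  | succ n ih => rw [rejections_succ]; exact ih.rejectStep

lemma assigned_daMatching_full (h : s ∈ finalRejections E R j) :
    #(assigned (daMatching E R) s) = E.quota s ∧
      ∀ l ∈ assigned (daMatching E R) s, E.higher s l j := by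
  rw [assigned_daMatching]
  exact (rejectionsJustified_rejections E R _).held_full ((rejectStep_final E R).symm ▸ h)

variable (E R) in
lemma not_blocks_daMatching (j : I) (s : S) : ¬ Blocks E R (daMatching E R) j s := by
  rintro ⟨hpref, hvacant | ⟨l, hl, hjl⟩⟩
  · have := (assigned_daMatching_full (mem_of_rank_lt_proposal hpref)).1
    omega
  · exact lt_asymm hjl ((assigned_daMatching_full (mem_of_rank_lt_proposal hpref)).2 l
      (mem_filter.mpr ⟨mem_univ _, hl⟩))

variable (E R) in
lemma stable_daMatching : Stable E R (daMatching E R) :=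
  ⟨feasible_daMatching E R, indivRat_daMatching E R, not_blocks_daMatching E R⟩

lemma notMem_rejections_of_stable {ν : Matching I S} (hν : Stable E R ν) (n : ℕ) :
    ∀ j s, ν j = some s → s ∉ rejections E R n j := by
  induction n with
  | zero => intro j s _ h; simp [rejections] at h
  | succ n ih =>
    intro j s hj hs
    rw [rejections_succ] at hs
    obtain ⟨hcard, hhigher⟩ := (rejectionsJustified_rejections E R n).held_full hs
    -- `s` holds `quota s` students besides `j`, so `ν` cannot give `s` to all of them
    obtain ⟨l, hl, hνl⟩ : ∃ l ∈ held E R (rejections E R n) s, ν l ≠ some s := by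
      by_contra! hall
      have hj' : j ∉ held E R (rejections E R n) s := fun h => lt_irrefl _ (hhigher j h)
      have hsub : insert j (held E R (rejections E R n) s) ⊆ assigned ν s :=
        insert_subset (mem_filter.mpr ⟨mem_univ _, hj⟩)
          fun l hl => mem_filter.mpr ⟨mem_univ _, hall l hl⟩
      have := card_le_card hsub
      rw [card_insert_of_notMem hj', hcard] at this
      have := hν.1 s
      omega
    have hle : (R l).rank (some s) ≤ (R l).rank (ν l) :=
      proposal_eq_of_mem_held hl ▸ rank_proposal_le (hν.2.1 l) (ih l)
    exact hν.2.2 l s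
      ⟨lt_of_le_of_ne hle ((R l).inj.ne hνl.symm), Or.inr ⟨j, hj, hhigher l hl⟩⟩

variable (E R) in
lemma studentOptimal_daMatching : StudentOptimal E R (daMatching E R) :=
  ⟨stable_daMatching E R, fun _ hν j =>
    rank_proposal_le (hν.2.1 j) (notMem_rejections_of_stable hν _ j)⟩

lemma StudentOptimal.eq {μ ν : Matching I S} (hμ : StudentOptimal E R μ)
    (hν : StudentOptimal E R ν) : μ = ν :=
  funext fun j => (R j).inj (le_antisymm (hμ.2 ν hν.1 j) (hν.2 μ hμ.1 j))

variable (E R) in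
theorem studentOptimal_DA : StudentOptimal E R (DA E R) := by
  have h : ∃ μ, StudentOptimal E R μ := ⟨_, studentOptimal_daMatching E R⟩
  rw [DA, dif_pos h]
  exact h.choose_spec

variable (E R) in
lemma DA_eq_daMatching : DA E R = daMatching E R :=
  (studentOptimal_DA E R).eq (studentOptimal_daMatching E R)

end StudentOptimality

lemma _root_.Finset.biUnion_eq_of_card_le_card {ι α : Type*} [DecidableEq α] {W : Finset ι}
    {A B : ι → Finset α} {G : Finset α} (hB : (W : Set ι).PairwiseDisjoint B)
    (hGA : G ⊆ W.biUnion A) (hBG : W.biUnion B ⊆ G) (hAB : ∀ w ∈ W, #(A w) ≤ #(B w)) :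
    W.biUnion B = G ∧ ∀ w ∈ W, A w ⊆ G ∧ #(A w) = #(B w) := by
  have h₁ : #G ≤ ∑ w ∈ W, #(A w) := (card_le_card hGA).trans card_biUnion_le
  have h₂ : ∑ w ∈ W, #(B w) ≤ #G := card_biUnion hB ▸ card_le_card hBG
  have hsum : ∑ w ∈ W, #(A w) = ∑ w ∈ W, #(B w) :=
    le_antisymm (sum_le_sum hAB) (h₂.trans h₁)
  have hA : W.biUnion A = G :=
    (eq_of_subset_of_card_le hGA (card_biUnion_le.trans (by omega))).symm
  refine ⟨eq_of_subset_of_card_le hBG (by rw [card_biUnion hB]; omega), fun w hw =>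
    ⟨hA ▸ subset_biUnion_of_mem A hw, (sum_eq_sum_iff_of_le hAB).mp hsum w hw⟩⟩

section BlockingLemma

variable {E : Prio I S} {R : I → Pref S} {ν : Matching I S} {D : I → Finset S} {j : I} {s : S}

variable (E R) in
noncomputable def gainers (ν : Matching I S) : Finset I :=
  univ.filter fun j => (R j).rank (ν j) < (R j).rank (daMatching E R j)

lemma mem_gainers : j ∈ gainers E R ν ↔ (R j).rank (ν j) < (R j).rank (daMatching E R j) := by
  simp [gainers]

lemma rank_le_of_notMem_gainers (hj : j ∉ gainers E R ν) :
    (R j).rank (daMatching E R j) ≤ (R j).rank (ν j) :=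
  not_lt.mp (mem_gainers.not.mp hj)

/-- Under deferred acceptance, the school a gainer gets under `ν` is filled with students of
higher priority than him; the rest is counting. -/
lemma exists_displaced_gainer (hν : Feasible E ν)
    (hnb : ∀ l s, l ∉ gainers E R ν → ¬ Blocks E R ν l s) {j₀ : I}
    (hj₀ : j₀ ∈ gainers E R ν) :
    ∃ w x, daMatching E R j₀ = some w ∧ x ∈ gainers E R ν ∧ ν x = some w := by
  set μ := daMatching E R
  set G := gainers E R ν
  set W := univ.filter fun w => ∃ j ∈ G, ν j = some w
  have hfull : ∀ w ∈ W, ∃ j, ν j = some w ∧ #(assigned μ w) = E.quota w ∧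
      ∀ l ∈ assigned μ w, E.higher w l j := by
    intro w hw
    obtain ⟨j, hj, hjw⟩ := (mem_filter.mp hw).2
    exact ⟨j, hjw,
      assigned_daMatching_full (mem_of_rank_lt_proposal (hjw ▸ mem_gainers.mp hj))⟩
  have hdisj : (W : Set S).PairwiseDisjoint fun w => assigned μ w \ assigned ν w :=
    fun x _ y _ hxy => disjoint_left.mpr fun l hx hy => hxy <| Option.some_injective _ <|
      (mem_filter.mp (mem_sdiff.mp hx).1).2.symm.trans (mem_filter.mp (mem_sdiff.mp hy).1).2
  have hGA : G ⊆ W.biUnion fun w => assigned ν w \ assigned μ w := by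
    intro j hj
    have hlt := mem_gainers.mp hj
    cases hνj : ν j with
    | none => exact absurd (hνj ▸ hlt) (not_lt.mpr (indivRat_daMatching E R j))
    | some w =>
      refine mem_biUnion.mpr ⟨w, mem_filter.mpr ⟨mem_univ _, j, hj, hνj⟩, mem_sdiff.mpr
        ⟨mem_filter.mpr ⟨mem_univ _, hνj⟩, fun hμj => ?_⟩⟩
      have hμj' : daMatching E R j = some w := (mem_filter.mp hμj).2
      rw [hμj', ← hνj] at hlt
      exact lt_irrefl _ hlt
  have hBG : (W.biUnion fun w => assigned μ w \ assigned ν w) ⊆ G := by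
    intro l hl
    obtain ⟨w, hw, hl⟩ := mem_biUnion.mp hl
    obtain ⟨hμl, hνl⟩ := mem_sdiff.mp hl
    obtain ⟨j, hjw, -, hhigher⟩ := hfull w hw
    by_contra hlG
    have hle := rank_le_of_notMem_gainers hlG
    have hμl' : daMatching E R l = some w := (mem_filter.mp hμl).2
    rw [hμl'] at hle
    refine hnb l w hlG ⟨lt_of_le_of_ne hle ((R l).inj.ne fun h => hνl ?_),
      Or.inr ⟨j, hjw, hhigher l hμl⟩⟩
    exact mem_filter.mpr ⟨mem_univ _, h.symm⟩
  have hAB : ∀ w ∈ W,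
      #(assigned ν w \ assigned μ w) ≤ #(assigned μ w \ assigned ν w) := by
    intro w hw
    obtain ⟨-, -, hcard, -⟩ := hfull w hw
    have h₁ := card_sdiff_add_card_inter (assigned ν w) (assigned μ w)
    have h₂ := card_sdiff_add_card_inter (assigned μ w) (assigned ν w)
    rw [inter_comm] at h₂
    have := hν w
    omega
  obtain ⟨hBun, hA⟩ := Finset.biUnion_eq_of_card_le_card hdisj hGA hBG hAB
  obtain ⟨w, hw, hj₀w⟩ := mem_biUnion.mp (hBun ▸ hj₀)
  obtain ⟨hAG, hAcard⟩ := hA w hw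
  obtain ⟨x, hx⟩ : (assigned ν w \ assigned μ w).Nonempty :=
    card_pos.mp (hAcard ▸ card_pos.mpr ⟨j₀, hj₀w⟩)
  exact ⟨w, x, (mem_filter.mp (mem_sdiff.mp hj₀w).1).2, hAG hx,
    (mem_filter.mp (mem_sdiff.mp hx).1).2⟩

variable (E R) in
noncomputable def settleRound (j : I) : ℕ :=
  Nat.find (⟨stableRound E R, rfl⟩ : ∃ n, proposal R (rejections E R n) j = daMatching E R j)

lemma proposal_eq_of_settleRound_le {n : ℕ} (h : settleRound E R j ≤ n) :
    proposal R (rejections E R n) j = daMatching E R j := by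
  refine (R j).inj (le_antisymm (rank_proposal_mono (rejections_le_final E R n j)) ?_)
  calc (R j).rank (daMatching E R j)
      = (R j).rank (proposal R (rejections E R (settleRound E R j)) j) := by
        rw [settleRound, Nat.find_spec (⟨stableRound E R, rfl⟩ :
          ∃ n, proposal R (rejections E R n) j = daMatching E R j)]
    _ ≤ _ := rank_proposal_mono (monotone_rejections E R h j)

lemma proposal_ne_of_lt_settleRound {n : ℕ} (h : n < settleRound E R j) :
    proposal R (rejections E R n) j ≠ daMatching E R j :=
  Nat.find_min _ h

lemma exists_rejected_of_mem_held_rejectStep (hj : j ∉ held E R D s)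
    (hj' : j ∈ held E R (rejectStep E R D) s) (hfull : #(held E R D s) = E.quota s) :
    ∃ y ∈ held E R D s, proposal R (rejectStep E R D) y = some s ∧
      y ∉ held E R (rejectStep E R D) s := by
  by_contra! hall
  have hsub : insert j (held E R D s) ⊆ held E R (rejectStep E R D) s :=
    insert_subset hj' fun y hy => hall y hy (proposal_rejectStep_of_mem_held hy)
  have h₁ := card_le_card hsub
  rw [card_insert_of_notMem hj, hfull, held, Prio.card_choice] at h₁
  omega

/-- The blocking lemma of Gale and Sotomayor. -/
theorem exists_blocks_of_mem_gainers (hν : Feasible E ν) {i : I} (hi : i ∈ gainers E R ν) :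
    ∃ l s, l ∉ gainers E R ν ∧ Blocks E R ν l s := by
  by_contra! hnb
  -- the gainer who settles last displaces, in that round, a non-gainer who blocks `ν`
  obtain ⟨j₀, hj₀, hlast⟩ := exists_max_image (gainers E R ν) (settleRound E R) ⟨i, hi⟩
  obtain ⟨w, x, hμj₀, hx, hνx⟩ := exists_displaced_gainer hν hnb hj₀
  have hxw : w ∈ rejections E R (settleRound E R j₀) x := by
    refine mem_of_rank_lt_proposal (R := R) ?_
    rw [proposal_eq_of_settleRound_le (hlast x hx), ← hνx]
    exact mem_gainers.mp hx
  obtain ⟨e, he⟩ : ∃ e, settleRound E R j₀ = e + 1 :=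
    Nat.exists_eq_succ_of_ne_zero fun h => by simp [h, rejections] at hxw
  rw [he, rejections_succ] at hxw
  obtain ⟨hfull, hhigher⟩ := (rejectionsJustified_rejections E R e).held_full hxw
  have hj₀e : j₀ ∉ held E R (rejections E R e) w := fun h =>
    proposal_ne_of_lt_settleRound (he ▸ lt_add_one e)
      ((proposal_eq_of_mem_held h).trans hμj₀.symm)
  have hj₀e' : j₀ ∈ held E R (rejectStep E R (rejections E R e)) w := by
    rw [← rejections_succ]
    exact mem_held_of_proposal_eq_daMatching
      ((proposal_eq_of_settleRound_le he.le).trans hμj₀) hμj₀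
  obtain ⟨y, hy, hyw, hyw'⟩ := exists_rejected_of_mem_held_rejectStep hj₀e hj₀e' hfull
  rw [← rejections_succ] at hyw hyw'
  have hwy : (R y).rank (some w) < (R y).rank (daMatching E R y) := by
    have hmem : w ∈ finalRejections E R y := rejections_le_final E R (e + 2) y (by
      rw [rejections_succ]
      exact mem_rejectStep.mpr (Or.inr ⟨hyw, hyw'⟩))
    have hne : daMatching E R y ≠ some w := fun h =>
      (mem_candidates.mp (mem_candidates_of_proposal_eq h)).2 hmem
    exact lt_of_le_of_ne (hyw ▸ rank_proposal_mono (rejections_le_final E R (e + 1) y))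
      ((R y).inj.ne hne.symm)
  by_cases hyG : y ∈ gainers E R ν
  · have := (proposal_eq_of_settleRound_le (he ▸ hlast y hyG)).symm.trans hyw
    rw [this] at hwy
    exact lt_irrefl _ hwy
  · exact hnb y w hyG ⟨hwy.trans_le (rank_le_of_notMem_gainers hyG),
      Or.inr ⟨x, hνx, hhigher y hy⟩⟩

end BlockingLemma

variable (E) in
theorem DA_strategyproof (P : I → Pref S) (i : I) (q : Pref S) :
    (P i).rank (DA E P i) ≤ (P i).rank (DA E (Function.update P i q) i) := by
  set ν := DA E (Function.update P i q)
  have hν := (studentOptimal_DA E (Function.update P i q)).1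
  by_contra h
  have hi : i ∈ gainers E P ν := mem_gainers.mpr (DA_eq_daMatching E P ▸ not_le.mp h)
  obtain ⟨l, s, hl, hb⟩ := exists_blocks_of_mem_gainers hν.1 hi
  have hli : l ≠ i := fun e => hl (by rw [e]; exact hi)
  exact hν.2.2 l s (by simpa [Blocks, Function.update_of_ne hli] using hb)

lemma rank_lt_none_of_DA_eq_some {E : Prio I S} {R : I → Pref S} {i : I} {a : S}
    (h : DA E R i = some a) : (R i).rank (some a) < (R i).rank none :=
  lt_of_le_of_ne (h ▸ (studentOptimal_DA E R).1.2.1 i) ((R i).inj.ne (by simp))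

section Congruence

def AgreeOnAcceptable (p q : Pref S) : Prop :=
  (∀ x, p.rank x ≤ p.rank none ↔ q.rank x ≤ q.rank none) ∧
    ∀ x y, p.rank x ≤ p.rank none → p.rank y ≤ p.rank none →
      (p.rank x < p.rank y ↔ q.rank x < q.rank y)

lemma AgreeOnAcceptable.refl (p : Pref S) : AgreeOnAcceptable p p :=
  ⟨fun _ => Iff.rfl, fun _ _ _ _ => Iff.rfl⟩

lemma AgreeOnAcceptable.symm {p q : Pref S} (h : AgreeOnAcceptable p q) : AgreeOnAcceptable q p :=
  ⟨fun x => (h.1 x).symm, fun x y hx hy => (h.2 x y ((h.1 x).mpr hx) ((h.1 y).mpr hy)).symm⟩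

variable {E : Prio I S} {R R' : I → Pref S} {μ : Matching I S}

lemma Stable.of_agreeOnAcceptable (h : ∀ j, AgreeOnAcceptable (R j) (R' j))
    (hμ : Stable E R μ) : Stable E R' μ := by
  refine ⟨hμ.1, fun j => ((h j).1 (μ j)).mp (hμ.2.1 j), fun j s hb => ?_⟩
  have hs : (R j).rank (some s) ≤ (R j).rank none :=
    ((h j).1 (some s)).mpr (hb.1.le.trans (((h j).1 (μ j)).mp (hμ.2.1 j)))
  exact hμ.2.2 j s ⟨((h j).2 (some s) (μ j) hs (hμ.2.1 j)).mpr hb.1, hb.2⟩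

lemma Stable.update_of_eq_none {P : I → Pref S} {i : I} {p q : Pref S}
    (hμ : Stable E (Function.update P i p) μ) (hi : μ i = none)
    (hqp : ∀ s, q.rank (some s) < q.rank none → p.rank (some s) < p.rank none) :
    Stable E (Function.update P i q) μ := by
  refine ⟨hμ.1, fun j => ?_, fun j s hb => ?_⟩
  · rcases eq_or_ne j i with rfl | hji
    · simp [hi]
    · simpa [Function.update_of_ne hji] using hμ.2.1 j
  · rcases eq_or_ne j i with rfl | hji
    · rw [Blocks, Function.update_self, hi] at hb
      exact hμ.2.2 j s ⟨by rw [Function.update_self, hi]; exact hqp s hb.1, hb.2⟩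
    · exact hμ.2.2 j s (by simpa [Blocks, Function.update_of_ne hji] using hb)

lemma DA_eq_of_stable (h₁ : Stable E R' (DA E R)) (h₂ : Stable E R (DA E R'))
    (hR : ∀ j, (R' j).rank (DA E R' j) ≤ (R' j).rank (DA E R j) →
      (R j).rank (DA E R' j) ≤ (R j).rank (DA E R j)) :
    DA E R = DA E R' :=
  funext fun j => (R j).inj (le_antisymm ((studentOptimal_DA E R).2 _ h₂ j)
    (hR j ((studentOptimal_DA E R').2 _ h₁ j)))

lemma DA_congr (h : ∀ j, AgreeOnAcceptable (R j) (R' j)) : DA E R = DA E R' := by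
  have h₂ := (studentOptimal_DA E R').1.of_agreeOnAcceptable fun j => (h j).symm
  refine DA_eq_of_stable ((studentOptimal_DA E R).1.of_agreeOnAcceptable h) h₂ fun j hle => ?_
  by_contra hlt
  exact not_lt.mpr hle (((h j).2 _ _ ((studentOptimal_DA E R).1.2.1 j) (h₂.2.1 j)).mp
    (not_le.mp hlt))

lemma DA_update_congr {P : I → Pref S} {i : I} {p q : Pref S} (h : AgreeOnAcceptable p q) :
    DA E (Function.update P i p) = DA E (Function.update P i q) := by
  refine DA_congr fun j => ?_
  rcases eq_or_ne j i with rfl | hji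
  · simpa using h
  · simpa [Function.update_of_ne hji] using AgreeOnAcceptable.refl _

lemma DA_update_eq_of_eq_none {P : I → Pref S} {i : I} {p q : Pref S}
    (hpq : ∀ s, p.rank (some s) < p.rank none ↔ q.rank (some s) < q.rank none)
    (hp : DA E (Function.update P i p) i = none) (hq : DA E (Function.update P i q) i = none) :
    DA E (Function.update P i p) = DA E (Function.update P i q) := by
  refine DA_eq_of_stable ((studentOptimal_DA E _).1.update_of_eq_none hp fun s => (hpq s).mpr)
    ((studentOptimal_DA E _).1.update_of_eq_none hq fun s => (hpq s).mp) fun j hle => ?_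
  rcases eq_or_ne j i with rfl | hji
  · rw [hp, hq]
  · simpa [Function.update_of_ne hji] using hle

lemma DA_update_eq_or_rank_le {P : I → Pref S} {i : I} {p q : Pref S}
    (hpq : ∀ s, p.rank (some s) < p.rank none ↔ q.rank (some s) < q.rank none) :
    DA E (Function.update P i q) = DA E (Function.update P i p) ∨
      ∃ a b, DA E (Function.update P i q) i = some a ∧
        DA E (Function.update P i p) i = some b ∧ q.rank (some a) ≤ q.rank (some b) := by
  have hspq := DA_strategyproof E (Function.update P i q) i p
  have hspp := DA_strategyproof E (Function.update P i p) i q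
  simp only [Function.update_self, Function.update_idem] at hspq hspp
  cases ha : DA E (Function.update P i q) i with
  | none =>
    cases hb : DA E (Function.update P i p) i with
    | none => exact Or.inl (DA_update_eq_of_eq_none (fun s => (hpq s).symm) ha hb)
    | some b =>
      have := (hpq b).mp (by simpa using rank_lt_none_of_DA_eq_some hb)
      rw [ha, hb] at hspq
      omega
  | some a =>
    cases hb : DA E (Function.update P i p) i with
    | none =>
      have := (hpq a).mpr (by simpa using rank_lt_none_of_DA_eq_some ha)
      rw [ha, hb] at hspp
      omega
    | some b => exact Or.inr ⟨a, b, rfl, rfl, by rw [ha, hb] at hspq; exact hspq⟩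

end Congruence

section Truncation

variable {A : S → Prop} [DecidablePred A] {p q : Pref S} {x : Option S}

lemma trunc_rank_of_goodB (p : Pref S) (h : goodB A x = true) : (trunc A p).rank x = p.rank x := by
  simp [trunc, h]

lemma trunc_rank_le_none_iff :
    (trunc A p).rank x ≤ (trunc A p).rank none ↔
      goodB A x = true ∧ p.rank x ≤ p.rank none := by
  cases x with
  | none => simp [goodB]
  | some s =>
    by_cases hA : A s
    · simp [trunc, goodB, hA]
    · have := rank_lt_bnd p none
      simp [trunc, goodB, hA]
      omega

lemma trunc_rank_lt_none_iff {s : S} :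
    (trunc A p).rank (some s) < (trunc A p).rank none ↔
      A s ∧ p.rank (some s) < p.rank none := by
  by_cases hA : A s
  · simp [trunc, goodB, hA]
  · have := rank_lt_bnd p none
    simp [trunc, goodB, hA]
    omega

lemma agreeOnAcceptable_trunc
    (h : ∀ x y, goodB A x = true → goodB A y = true →
      (p.rank x < p.rank y ↔ q.rank x < q.rank y)) :
    AgreeOnAcceptable (trunc A p) (trunc A q) := by
  refine ⟨fun x => ?_, fun x y hx hy => ?_⟩
  · rw [trunc_rank_le_none_iff, trunc_rank_le_none_iff]
    exact and_congr_right fun hx => by simpa only [not_lt] using (h none x rfl hx).not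
  · rw [trunc_rank_le_none_iff] at hx hy
    rw [trunc_rank_of_goodB p hx.1, trunc_rank_of_goodB p hy.1, trunc_rank_of_goodB q hx.1,
      trunc_rank_of_goodB q hy.1]
    exact h x y hx.1 hy.1

lemma agreeOnAcceptable_trunc_false (p q : Pref S) :
    AgreeOnAcceptable (trunc (fun _ => False) p) (trunc (fun _ => False) q) :=
  agreeOnAcceptable_trunc (by rintro (_ | _) (_ | _) hx hy <;> simp_all [goodB])

end Truncation

section TieredDeferredAcceptance

variable {E : Prio I S} {t : S → ℕ} {Q : I → Pref S} {i : I} {n : ℕ}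

/-- The reports with which the students take part in round `k` of TDA, when `μ` is the
matching produced by the earlier rounds. -/
noncomputable def roundProfile (t : S → ℕ) (Q : I → Pref S) (μ : Matching I S) (k : ℕ) :
    I → Pref S :=
  fun j => if μ j = none then trunc (fun s => t s = k) (Q j) else trunc (fun _ => False) (Q j)

lemma TDAaux_succ (j : I) :
    TDAaux E t Q (n + 1) j =
      (TDAaux E t Q n j).or (DA E (roundProfile t Q (TDAaux E t Q n) (n + 1)) j) := by
  cases h : TDAaux E t Q n j
  · simp only [TDAaux, h, Option.none_or]
    rfl
  · simp only [TDAaux, h, Option.some_or]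

lemma TDAaux_succ_of_eq_some {a : S} (h : TDAaux E t Q n i = some a) :
    TDAaux E t Q (n + 1) i = some a := by
  rw [TDAaux_succ, h, Option.some_or]

lemma TDAaux_update_succ {p : Pref S} {μ : Matching I S}
    (hμ : TDAaux E t (Function.update Q i p) n = μ) :
    TDAaux E t (Function.update Q i p) (n + 1) = fun j => (μ j).or (DA E
      (Function.update (roundProfile t Q μ (n + 1)) i (if μ i = none
        then trunc (fun s => t s = n + 1) p else trunc (fun _ => False) p)) j) := by
  funext j
  rw [TDAaux_succ, hμ]
  congr 3
  funext l
  rcases eq_or_ne l i with rfl | hli <;> simp [roundProfile, Function.update_of_ne, *]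

def WeaklyBetterFor (R : Pref S) (i : I) (μ' μ : Matching I S) : Prop :=
  μ' = μ ∨ ∃ a b, μ' i = some a ∧ μ i = some b ∧ R.rank (some a) ≤ R.rank (some b)

lemma WeaklyBetterFor.rank_le {R : Pref S} {μ' μ : Matching I S}
    (h : WeaklyBetterFor R i μ' μ) : R.rank (μ' i) ≤ R.rank (μ i) := by
  rcases h with rfl | ⟨a, b, ha, hb, hab⟩
  · exact le_rfl
  · rwa [ha, hb]

lemma weaklyBetterFor_or_DA_update_trunc {A : S → Prop} [DecidablePred A] {P : I → Pref S}
    {μ : Matching I S} (hi : μ i = none) (R p q : Pref S)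
    (hacc : ∀ s, A s → (p.rank (some s) < p.rank none ↔ q.rank (some s) < q.rank none))
    (hbetter : ∀ a b, A a → A b → p.rank (some a) < p.rank none →
      p.rank (some b) < p.rank none → q.rank (some a) ≤ q.rank (some b) →
        R.rank (some a) ≤ R.rank (some b)) :
    WeaklyBetterFor R i (fun j => (μ j).or (DA E (Function.update P i (trunc A q)) j))
      (fun j => (μ j).or (DA E (Function.update P i (trunc A p)) j)) := by
  have htrunc : ∀ s, (trunc A p).rank (some s) < (trunc A p).rank none ↔
      (trunc A q).rank (some s) < (trunc A q).rank none := fun s => by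
    simp only [trunc_rank_lt_none_iff]
    exact and_congr_right (hacc s)
  rcases DA_update_eq_or_rank_le (E := E) (P := P) htrunc with heq | ⟨a, b, ha, hb, hab⟩
  · exact Or.inl (by rw [heq])
  · have ha' := trunc_rank_lt_none_iff.mp (by simpa using rank_lt_none_of_DA_eq_some ha)
    have hb' := trunc_rank_lt_none_iff.mp (by simpa using rank_lt_none_of_DA_eq_some hb)
    rw [trunc_rank_of_goodB (x := some a) q (decide_eq_true ha'.1),
      trunc_rank_of_goodB (x := some b) q (decide_eq_true hb'.1)] at hab
    exact Or.inr ⟨a, b, by simp [hi, ha], by simp [hi, hb],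
      hbetter a b ha'.1 hb'.1 ((hacc a ha'.1).mpr ha'.2) hb'.2 hab⟩

theorem weaklyBetterFor_TDAaux_update (R p q : Pref S) (k : ℕ)
    (hother : ∀ m ≠ k, ∀ x y, goodB (fun s => t s = m) x = true →
      goodB (fun s => t s = m) y = true → (p.rank x < p.rank y ↔ q.rank x < q.rank y))
    (hacc : ∀ s, t s = k → (p.rank (some s) < p.rank none ↔ q.rank (some s) < q.rank none))
    (hbetter : ∀ a b, t a = k → t b = k → p.rank (some a) < p.rank none →
      p.rank (some b) < p.rank none → q.rank (some a) ≤ q.rank (some b) →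
        R.rank (some a) ≤ R.rank (some b)) (n : ℕ) :
    WeaklyBetterFor R i (TDAaux E t (Function.update Q i q) n)
      (TDAaux E t (Function.update Q i p) n) := by
  induction n with
  | zero => exact Or.inl rfl
  | succ n ih =>
    rcases ih with h | ⟨a, b, ha, hb, hab⟩
    · set μ := TDAaux E t (Function.update Q i p) n
      rw [TDAaux_update_succ h, TDAaux_update_succ (μ := μ) rfl]
      by_cases hround : μ i = none ∧ n + 1 = k
      · obtain ⟨hi, rfl⟩ := hround
        simp only [hi, if_true]
        exact weaklyBetterFor_or_DA_update_trunc hi R p q hacc hbetter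
      · refine Or.inl ?_
        rw [DA_update_congr]
        split_ifs with hi
        · exact agreeOnAcceptable_trunc fun x y hx hy =>
            (hother (n + 1) (fun hk => hround ⟨hi, hk⟩) x y hx hy).symm
        · exact agreeOnAcceptable_trunc_false q p
    · exact Or.inr ⟨a, b, TDAaux_succ_of_eq_some ha, TDAaux_succ_of_eq_some hb, hab⟩

end TieredDeferredAcceptance

theorem within_tier_consistent_report_weakly_dominates_general
    (E : Prio I S) (t : S → ℕ)
    (i : I) (Ri Qi Qstar : Pref S) (s : S)
    (hin : ∀ s1 s2 : S,
      (t s1 = t s ∧ Qi.rank (some s1) < Qi.rank none) →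
      (t s2 = t s ∧ Qi.rank (some s2) < Qi.rank none) →
      (Qstar.rank (some s1) < Qstar.rank (some s2) ↔ Ri.rank (some s1) < Ri.rank (some s2)))
    (hout : ∀ x y : Option S,
      (∀ s1 : S, x = some s1 → ¬ (t s1 = t s ∧ Qi.rank (some s1) < Qi.rank none)) →
      (∀ s2 : S, y = some s2 → ¬ (t s2 = t s ∧ Qi.rank (some s2) < Qi.rank none)) →
      (Qstar.rank x < Qstar.rank y ↔ Qi.rank x < Qi.rank y))
    (hacc : ∀ s1 : S, t s1 = t s → Qi.rank (some s1) < Qi.rank none →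
      Qstar.rank (some s1) < Qstar.rank none) :
    (∀ Q : I → Pref S,
      Ri.rank (TDA E t (Function.update Q i Qstar) i) ≤
        Ri.rank (TDA E t (Function.update Q i Qi) i)) ∧
    ((∃ Q : I → Pref S,
        Ri.rank (TDA E t (Function.update Q i Qstar) i) <
          Ri.rank (TDA E t (Function.update Q i Qi) i)) ∨
      (∀ Q : I → Pref S,
        TDA E t (Function.update Q i Qstar) i = TDA E t (Function.update Q i Qi) i)) := by
  have hother : ∀ m ≠ t s, ∀ x y, goodB (fun s1 => t s1 = m) x = true →
      goodB (fun s1 => t s1 = m) y = true →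
        (Qi.rank x < Qi.rank y ↔ Qstar.rank x < Qstar.rank y) :=
    fun m hm x y hx hy => (hout x y
      (fun s1 h1 hc => hm ((by simpa [h1, goodB] using hx : t s1 = m).symm.trans hc.1))
      (fun s2 h2 hc => hm ((by simpa [h2, goodB] using hy : t s2 = m).symm.trans hc.1))).symm
  have hsame : ∀ s1, t s1 = t s →
      (Qi.rank (some s1) < Qi.rank none ↔ Qstar.rank (some s1) < Qstar.rank none) :=
    fun s1 h1 => ⟨hacc s1 h1, fun h2 => by_contra fun h3 => h3 ((hout (some s1) none
      (by rintro _ ⟨⟩ ⟨-, hc⟩; exact h3 hc) (by rintro _ ⟨⟩)).mp h2)⟩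
  have hbetter : ∀ a b, t a = t s → t b = t s → Qi.rank (some a) < Qi.rank none →
      Qi.rank (some b) < Qi.rank none → Qstar.rank (some a) ≤ Qstar.rank (some b) →
        Ri.rank (some a) ≤ Ri.rank (some b) :=
    fun a b ha hb hpa hpb hq => not_lt.mp fun hlt =>
      not_lt.mpr hq ((hin b a ⟨hb, hpb⟩ ⟨ha, hpa⟩).mpr hlt)
  have hle : ∀ Q : I → Pref S, Ri.rank (TDA E t (Function.update Q i Qstar) i) ≤
      Ri.rank (TDA E t (Function.update Q i Qi) i) := fun _ =>
    (weaklyBetterFor_TDAaux_update Ri Qi Qstar (t s) hother hsame hbetter _).rank_le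
  exact ⟨hle, or_iff_not_imp_left.mpr fun hstrict Q =>
    Ri.inj (le_antisymm (hle Q) (not_lt.mp fun h => hstrict ⟨Q, h⟩))⟩

/-- If the report `Qi` misranks two same-tier schools relative to the
true preference `Ri`, and `Qstar` agrees with `Qi` except that the acceptable schools of
that tier are reordered according to `Ri` (staying acceptable), then against every profile
of the others' reports, `Qstar` yields a weakly better assignment for `i` (by `Ri`) than
`Qi`; consequently `Qi` is weakly dominated by `Qstar` or always yields the same
assignment for `i`. -/
theorem within_tier_consistent_report_weakly_dominates
    (E : Prio I S) (t : S → ℕ) (T : ℕ) (ht : IsTierStructure t T)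
    (i : I) (Ri Qi Qstar : Pref S) (s s' : S)
    (htier : t s = t s')
    (htrue : Ri.rank (some s) < Ri.rank (some s'))
    (hmis : Qi.rank (some s') < Qi.rank (some s))
    (hin : ∀ s1 s2 : S,
      (t s1 = t s ∧ Qi.rank (some s1) < Qi.rank none) →
      (t s2 = t s ∧ Qi.rank (some s2) < Qi.rank none) →
      (Qstar.rank (some s1) < Qstar.rank (some s2) ↔ Ri.rank (some s1) < Ri.rank (some s2)))
    (hout : ∀ x y : Option S,
      (∀ s1 : S, x = some s1 → ¬ (t s1 = t s ∧ Qi.rank (some s1) < Qi.rank none)) →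
      (∀ s2 : S, y = some s2 → ¬ (t s2 = t s ∧ Qi.rank (some s2) < Qi.rank none)) →
      (Qstar.rank x < Qstar.rank y ↔ Qi.rank x < Qi.rank y))
    (hacc : ∀ s1 : S, t s1 = t s → Qi.rank (some s1) < Qi.rank none →
      Qstar.rank (some s1) < Qstar.rank none) :
    (∀ Q : I → Pref S,
      Ri.rank (TDA E t (Function.update Q i Qstar) i) ≤
        Ri.rank (TDA E t (Function.update Q i Qi) i)) ∧
    ((∃ Q : I → Pref S,
        Ri.rank (TDA E t (Function.update Q i Qstar) i) <
          Ri.rank (TDA E t (Function.update Q i Qi) i)) ∨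
      (∀ Q : I → Pref S,
        TDA E t (Function.update Q i Qstar) i = TDA E t (Function.update Q i Qi) i)) :=
  within_tier_consistent_report_weakly_dominates_general E t i Ri Qi Qstar s hin hout hacc

end SchoolChoice
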